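/- For every g ≥ 1, the number m_g of numerical semigroups of genus g having infinitely many descendants in the semigroup tree satisfies m_g ≤ 1 + (g−1) · Σ_{i=0}^{⌊(g−1)/2⌋} n_i, where n_i is the total number of numerical semigroups of genus i (with n₀ = 1). -/

import Mathlib

def IsNumericalSemigroup (Λ : Set ℕ) : Prop :=
  0 ∈ Λ ∧ (∀ a ∈ Λ, ∀ b ∈ Λ, a + b ∈ Λ) ∧ Λᶜ.Finite

noncomputable def sgGenus (Λ : Set ℕ) : ℕ := Λᶜ.ncard

noncomputable def sgFrobenius (Λ : Set ℕ) : ℕ := sSup Λᶜ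

noncomputable def sgMultiplicity (Λ : Set ℕ) : ℕ := sInf (Λ \ {0})

def IsMinimalGenerator (Λ : Set ℕ) (μ : ℕ) : Prop :=
  μ ∈ Λ ∧ μ ≠ 0 ∧ ¬ ∃ a ∈ Λ, ∃ b ∈ Λ, a ≠ 0 ∧ b ≠ 0 ∧ a + b = μ

def IsEffectiveGenerator (Λ : Set ℕ) (μ : ℕ) : Prop :=
  IsMinimalGenerator Λ μ ∧ sgFrobenius Λ < μ

def IsOrdinary (Λ : Set ℕ) : Prop := ∃ m : ℕ, Λ = {0} ∪ {n : ℕ | m ≤ n}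

def IsStrongGenerator (Λ : Set ℕ) (μ : ℕ) : Prop :=
  IsEffectiveGenerator Λ μ ∧ IsMinimalGenerator (Λ \ {μ}) (sgMultiplicity Λ + μ)

def IsChildOf (Λ' Λ : Set ℕ) : Prop :=
  IsNumericalSemigroup Λ' ∧ Λ' ⊂ Λ ∧ Λ' ∪ {sgFrobenius Λ'} = Λ

def sgDescendants (Λ : Set ℕ) : Set (Set ℕ) :=
  {Λ' | Relation.TransGen IsChildOf Λ' Λ}

/-!
A semigroup of genus `g` with infinitely many descendants is either the ordinary one
`{0} ∪ [g + 1, ∞)`, or else its Frobenius number `f` exceeds `g` and it has a nonzero element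
`a ≤ g`. Every descendant contains all elements `≤ f` and hence the monoid they generate; if their
gcd `d` were `1` that monoid would be cofinite, leaving only finitely many descendants. So
`2 ≤ d ≤ a ≤ g`. The quotient `Λ / d = {x | d x ∈ Λ}` is a numerical semigroup, and its gaps map to
gaps of `Λ` disjoint from the `f - ⌊f / d⌋ ≥ ⌈(g + 1) / 2⌉` non-multiples of `d` in `[1, f]`,
so `Λ / d` has genus at most `⌊(g - 1) / 2⌋`. Finally `Λ ↦ (d, Λ / d)` is injective on
semigroups of genus `g`, since `d` and `Λ / d` determine the elements `≤ f`.
-/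

open Set

section Frobenius

variable {Λ : Set ℕ}

lemma le_sgFrobenius_of_notMem (hΛ : Λᶜ.Finite) {x : ℕ} (hx : x ∉ Λ) : x ≤ sgFrobenius Λ :=
  le_csSup hΛ.bddAbove hx

lemma mem_of_sgFrobenius_lt (hΛ : Λᶜ.Finite) {x : ℕ} (hx : sgFrobenius Λ < x) : x ∈ Λ := by
  by_contra h
  exact hx.not_ge (le_sgFrobenius_of_notMem hΛ h)

lemma sgFrobenius_notMem (hΛ : Λᶜ.Finite) (hne : Λᶜ.Nonempty) : sgFrobenius Λ ∉ Λ :=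
  Nat.sSup_mem hne hΛ.bddAbove

lemma compl_subset_Icc_sgFrobenius (hΛ : IsNumericalSemigroup Λ) :
    Λᶜ ⊆ Icc 1 (sgFrobenius Λ) := fun _ hx =>
  ⟨Nat.one_le_iff_ne_zero.mpr fun h => hx (h ▸ hΛ.1), le_sgFrobenius_of_notMem hΛ.2.2 hx⟩

lemma sgFrobenius_lt_two_mul_sgGenus (hΛ : IsNumericalSemigroup Λ) (hne : Λᶜ.Nonempty) :
    sgFrobenius Λ < 2 * sgGenus Λ := by
  set f := sgFrobenius Λ
  have hf := sgFrobenius_notMem hΛ.2.2 hne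
  -- `x + (f - x) = f` is a gap, so `x` or `f - x` is one.
  have hcover : Iic f ⊆ Λᶜ ∪ (f - ·) '' Λᶜ := by
    intro x (hx : x ≤ f)
    by_cases hxΛ : x ∈ Λ
    · refine Or.inr ⟨f - x, fun h => hf ?_, Nat.sub_sub_self hx⟩
      simpa [Nat.add_sub_cancel' hx] using hΛ.2.1 x hxΛ (f - x) h
    · exact Or.inl hxΛ
  have hle := ncard_le_ncard hcover (hΛ.2.2.union (hΛ.2.2.image _))
  have hunion := ncard_union_le Λᶜ ((f - ·) '' Λᶜ)
  have himage := ncard_image_le (f := (f - ·)) hΛ.2.2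
  rw [ncard_Iic_nat] at hle
  unfold sgGenus
  omega

lemma compl_subset_Iio_two_mul_sgGenus (hΛ : IsNumericalSemigroup Λ) :
    Λᶜ ⊆ Iio (2 * sgGenus Λ) := fun _ hx =>
  (le_sgFrobenius_of_notMem hΛ.2.2 hx).trans_lt (sgFrobenius_lt_two_mul_sgGenus hΛ ⟨_, hx⟩)

end Frobenius

lemma finite_setOf_compl_subset {α : Type*} {s : Set α} (hs : s.Finite) :
    {Λ : Set α | Λᶜ ⊆ s}.Finite :=
  (hs.finite_subsets.image compl).subset fun Λ hΛ => ⟨Λᶜ, hΛ, compl_compl Λ⟩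

lemma finite_setOf_sgGenus_le (n : ℕ) :
    {Λ : Set ℕ | IsNumericalSemigroup Λ ∧ sgGenus Λ ≤ n}.Finite :=
  (finite_setOf_compl_subset (finite_Iio (2 * n))).subset fun _ ⟨hΛ, hn⟩ =>
    (compl_subset_Iio_two_mul_sgGenus hΛ).trans (Iio_subset_Iio (by omega))

section Ordinary

variable {Λ : Set ℕ}

lemma isOrdinary_iff_exists_compl_eq_Icc : IsOrdinary Λ ↔ ∃ n, Λᶜ = Icc 1 n := by
  constructor
  · rintro ⟨m, rfl⟩
    exact ⟨m - 1, by ext x; simp only [mem_compl_iff, mem_union, mem_singleton_iff,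
      mem_ofPred_eq, mem_Icc]; omega⟩
  · rintro ⟨n, hn⟩
    refine ⟨n + 1, ?_⟩
    rw [← compl_compl Λ, hn]
    ext x
    simp only [mem_compl_iff, mem_union, mem_singleton_iff, mem_ofPred_eq, mem_Icc]
    omega

lemma IsOrdinary.compl_eq_Icc_sgGenus (h : IsOrdinary Λ) : Λᶜ = Icc 1 (sgGenus Λ) := by
  obtain ⟨n, hn⟩ := isOrdinary_iff_exists_compl_eq_Icc.mp h
  rw [sgGenus, hn, ncard_Icc_nat, Nat.add_sub_cancel]

lemma IsOrdinary.eq_of_sgGenus_eq {Λ₁ Λ₂ : Set ℕ} (h₁ : IsOrdinary Λ₁) (h₂ : IsOrdinary Λ₂)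
    (hg : sgGenus Λ₁ = sgGenus Λ₂) : Λ₁ = Λ₂ :=
  compl_injective (by rw [h₁.compl_eq_Icc_sgGenus, h₂.compl_eq_Icc_sgGenus, hg])

lemma isOrdinary_of_compl_subset_Icc {n : ℕ} (h : Λᶜ ⊆ Icc 1 n)
    (hn : n ≤ sgGenus Λ) : IsOrdinary Λ := by
  refine isOrdinary_iff_exists_compl_eq_Icc.mpr ⟨n, eq_of_subset_of_ncard_le h ?_⟩
  rwa [ncard_Icc_nat, Nat.add_sub_cancel]

lemma isOrdinary_of_Icc_subset_compl (hΛ : Λᶜ.Finite) (h : Icc 1 (sgGenus Λ) ⊆ Λᶜ) :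
    IsOrdinary Λ := by
  refine isOrdinary_iff_exists_compl_eq_Icc.mpr ⟨sgGenus Λ, (eq_of_subset_of_ncard_le h ?_ hΛ).symm⟩
  rw [ncard_Icc_nat, Nat.add_sub_cancel, sgGenus]

lemma sgGenus_lt_sgFrobenius (hΛ : IsNumericalSemigroup Λ) (h : ¬ IsOrdinary Λ) :
    sgGenus Λ < sgFrobenius Λ :=
  lt_of_not_ge fun hle => h (isOrdinary_of_compl_subset_Icc (compl_subset_Icc_sgFrobenius hΛ) hle)

lemma exists_pos_mem_le_sgGenus (hΛ : IsNumericalSemigroup Λ) (h : ¬ IsOrdinary Λ) :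
    ∃ a ∈ Λ, 0 < a ∧ a ≤ sgGenus Λ := by
  by_contra! hno
  exact h (isOrdinary_of_Icc_subset_compl hΛ.2.2 fun a ha hmem => (hno a hmem ha.1).not_ge ha.2)

end Ordinary

section Descendants

variable {Λ Λ' : Set ℕ}

lemma IsChildOf.sgFrobenius_lt (h : IsChildOf Λ' Λ) : sgFrobenius Λ < sgFrobenius Λ' := by
  obtain ⟨hΛ', hsub, hunion⟩ := h
  have hgap : sgFrobenius Λ' ∉ Λ' := by
    obtain ⟨x, -, hx⟩ := exists_of_ssubset hsub
    exact sgFrobenius_notMem hΛ'.2.2 ⟨x, hx⟩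
  have hmem : sgFrobenius Λ' ∈ Λ := hunion ▸ Or.inr rfl
  have hfin : Λᶜ.Finite := hΛ'.2.2.subset (compl_subset_compl.mpr hsub.subset)
  rcases Λᶜ.eq_empty_or_nonempty with hempty | hne
  · rw [sgFrobenius, hempty, csSup_empty]
    exact Nat.pos_of_ne_zero fun h => hgap (h ▸ hΛ'.1)
  · refine lt_of_le_of_ne ?_ fun h => sgFrobenius_notMem hfin hne (h ▸ hmem)
    exact le_sgFrobenius_of_notMem hΛ'.2.2 fun h => sgFrobenius_notMem hfin hne (hsub.subset h)

lemma IsChildOf.mem_of_le_sgFrobenius (h : IsChildOf Λ' Λ) {x : ℕ} (hx : x ∈ Λ)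
    (hxf : x ≤ sgFrobenius Λ) : x ∈ Λ' := by
  rw [← h.2.2] at hx
  exact hx.resolve_right fun hx' => (hx' ▸ hxf).not_gt h.sgFrobenius_lt

lemma mem_of_mem_sgDescendants (h : Λ' ∈ sgDescendants Λ) {x : ℕ} (hx : x ∈ Λ)
    (hxf : x ≤ sgFrobenius Λ) : x ∈ Λ' := by
  induction h generalizing x with
  | single hc => exact hc.mem_of_le_sgFrobenius hx hxf
  | tail _ hc ih => exact ih (hc.mem_of_le_sgFrobenius hx hxf) (hxf.trans hc.sgFrobenius_lt.le)

lemma isNumericalSemigroup_of_mem_sgDescendants (h : Λ' ∈ sgDescendants Λ) :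
    IsNumericalSemigroup Λ' := by
  obtain ⟨_, hc, -⟩ := Relation.TransGen.head'_iff.mp h
  exact hc.1

end Descendants

lemma IsNumericalSemigroup.closure_subset {Λ A : Set ℕ} (hΛ : IsNumericalSemigroup Λ)
    (h : A ⊆ Λ) : (AddSubmonoid.closure A : Set ℕ) ⊆ Λ := fun _ hx => by
  induction hx using AddSubmonoid.closure_induction with
  | mem a ha => exact h ha
  | zero => exact hΛ.1
  | add a b _ _ ha hb => exact hΛ.2.1 a ha b hb

/-- The paper's `λ₀, …, λ_{f-g}`: `f` itself is a gap whenever `Λ ≠ ℕ`. -/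
def sgBelowFrobenius (Λ : Set ℕ) : Set ℕ := {a ∈ Λ | a ≤ sgFrobenius Λ}

noncomputable def sgGcd (Λ : Set ℕ) : ℕ := Nat.setGcd (sgBelowFrobenius Λ)

lemma sgGcd_dvd {Λ : Set ℕ} {a : ℕ} (ha : a ∈ sgBelowFrobenius Λ) : sgGcd Λ ∣ a :=
  Nat.setGcd_dvd_of_mem ha

def sgQuotient (Λ : Set ℕ) (d : ℕ) : Set ℕ := {x | d * x ∈ Λ}

lemma card_Ioc_filter_not_dvd (n d : ℕ) : {x ∈ Finset.Ioc 0 n | ¬ d ∣ x}.card = n - n / d := by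
  rw [Finset.filter_not, Finset.card_sdiff_of_subset (Finset.filter_subset _ _),
    Nat.Ioc_filter_dvd_card_eq_div, Nat.card_Ioc, Nat.sub_zero]

section Quotient

variable {Λ : Set ℕ}

lemma finite_sgDescendants_of_sgGcd_eq_one (h : sgGcd Λ = 1) : (sgDescendants Λ).Finite := by
  obtain ⟨N, hN⟩ := Nat.exists_mem_closure_of_ge (sgBelowFrobenius Λ)
  refine (finite_setOf_compl_subset (finite_Iio N)).subset fun Λ' hΛ' x hx =>
    mem_Iio.mpr (lt_of_not_ge fun hNx => hx ?_)
  have hsmall : sgBelowFrobenius Λ ⊆ Λ' := fun a ha => mem_of_mem_sgDescendants hΛ' ha.1 ha.2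
  exact (isNumericalSemigroup_of_mem_sgDescendants hΛ').closure_subset hsmall
    (hN x hNx (h ▸ one_dvd x : sgGcd Λ ∣ x))

lemma isNumericalSemigroup_sgQuotient (hΛ : IsNumericalSemigroup Λ) (d : ℕ) :
    IsNumericalSemigroup (sgQuotient Λ d) := by
  refine ⟨by simpa [sgQuotient] using hΛ.1, fun a ha b hb => ?_, ?_⟩
  · simpa [sgQuotient, mul_add] using hΛ.2.1 _ ha _ hb
  · refine (finite_Iic (sgFrobenius Λ)).subset fun x (hx : d * x ∉ Λ) => ?_
    have hd : d ≠ 0 := by rintro rfl; simp [hΛ.1] at hx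
    exact (Nat.le_mul_of_pos_left x (Nat.pos_of_ne_zero hd)).trans
      (le_sgFrobenius_of_notMem hΛ.2.2 hx)

lemma sgGenus_sgQuotient_add_le (hΛ : IsNumericalSemigroup Λ) {d : ℕ} (hd : 0 < d)
    (hdvd : ∀ a ∈ sgBelowFrobenius Λ, d ∣ a) :
    sgGenus (sgQuotient Λ d) + (sgFrobenius Λ - sgFrobenius Λ / d) ≤ sgGenus Λ := by
  set f := sgFrobenius Λ
  have hN := card_Ioc_filter_not_dvd f d
  set N := {n ∈ Finset.Ioc 0 f | ¬ d ∣ n}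
  have hmul : (d * ·) '' (sgQuotient Λ d)ᶜ ⊆ Λᶜ := image_subset_iff.mpr fun _ hx => hx
  have hnondvd : (N : Set ℕ) ⊆ Λᶜ := by
    intro n hn hnΛ
    simp only [N, Finset.coe_filter, Finset.mem_Ioc, mem_ofPred_eq] at hn
    exact hn.2 (hdvd n ⟨hnΛ, hn.1.2⟩)
  have hdisj : Disjoint ((d * ·) '' (sgQuotient Λ d)ᶜ) (N : Set ℕ) := by
    refine disjoint_left.mpr ?_
    rintro _ ⟨x, -, rfl⟩ hx
    simp [N] at hx
  have := ncard_le_ncard (union_subset hmul hnondvd) hΛ.2.2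
  rwa [ncard_union_eq hdisj ((isNumericalSemigroup_sgQuotient hΛ d).2.2.image _) N.finite_toSet,
    ncard_image_of_injective _ (mul_right_injective₀ hd.ne'), ncard_coe_finset, hN] at this

lemma subset_of_sgQuotient_eq {Λ₁ Λ₂ : Set ℕ} (h₁ : Λ₁ᶜ.Finite) {d : ℕ}
    (hd₂ : ∀ a ∈ sgBelowFrobenius Λ₂, d ∣ a) (hq : sgQuotient Λ₁ d = sgQuotient Λ₂ d)
    (hf : sgFrobenius Λ₁ ≤ sgFrobenius Λ₂) : Λ₂ ⊆ Λ₁ := by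
  intro x hx
  by_cases hxf : x ≤ sgFrobenius Λ₂
  · obtain ⟨y, rfl⟩ := hd₂ x ⟨hx, hxf⟩
    exact (hq ▸ hx : y ∈ sgQuotient Λ₁ d)
  · exact mem_of_sgFrobenius_lt h₁ (by omega)

lemma eq_of_sgQuotient_eq {Λ₁ Λ₂ : Set ℕ} (h₁ : Λ₁ᶜ.Finite) (h₂ : Λ₂ᶜ.Finite)
    (hg : sgGenus Λ₁ = sgGenus Λ₂) {d : ℕ} (hd₁ : ∀ a ∈ sgBelowFrobenius Λ₁, d ∣ a)
    (hd₂ : ∀ a ∈ sgBelowFrobenius Λ₂, d ∣ a) (hq : sgQuotient Λ₁ d = sgQuotient Λ₂ d) :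
    Λ₁ = Λ₂ := by
  rcases le_total (sgFrobenius Λ₁) (sgFrobenius Λ₂) with hf | hf
  · exact compl_injective (eq_of_subset_of_ncard_le
      (compl_subset_compl.mpr (subset_of_sgQuotient_eq h₁ hd₂ hq hf)) hg.ge h₂)
  · exact (compl_injective (eq_of_subset_of_ncard_le
      (compl_subset_compl.mpr (subset_of_sgQuotient_eq h₂ hd₁ hq.symm hf)) hg.le h₁)).symm

lemma sgGcd_mem_Icc (hΛ : IsNumericalSemigroup Λ) (hord : ¬ IsOrdinary Λ)
    (hinf : (sgDescendants Λ).Infinite) : sgGcd Λ ∈ Finset.Icc 2 (sgGenus Λ) := by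
  obtain ⟨a, ha, ha0, hag⟩ := exists_pos_mem_le_sgGenus hΛ hord
  have hdvd : sgGcd Λ ∣ a :=
    sgGcd_dvd ⟨ha, hag.trans (sgGenus_lt_sgFrobenius hΛ hord).le⟩
  have hpos : 0 < sgGcd Λ := Nat.pos_of_dvd_of_pos hdvd ha0
  have hne : sgGcd Λ ≠ 1 := fun h => hinf (finite_sgDescendants_of_sgGcd_eq_one h)
  exact Finset.mem_Icc.mpr ⟨by omega, (Nat.le_of_dvd ha0 hdvd).trans hag⟩

lemma sgGenus_sgQuotient_sgGcd_le (hΛ : IsNumericalSemigroup Λ) (hord : ¬ IsOrdinary Λ)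
    (hd : 2 ≤ sgGcd Λ) : sgGenus (sgQuotient Λ (sgGcd Λ)) ≤ (sgGenus Λ - 1) / 2 := by
  have hgen := sgGenus_sgQuotient_add_le hΛ (by omega : 0 < sgGcd Λ)
    fun _ ha => sgGcd_dvd ha
  have hf := sgGenus_lt_sgFrobenius hΛ hord
  have hdiv : sgFrobenius Λ / sgGcd Λ ≤ sgFrobenius Λ / 2 := Nat.div_le_div_left hd two_pos
  omega

end Quotient

lemma injOn_sgGcd_sgQuotient (g : ℕ) :
    InjOn (fun Λ => (sgGcd Λ, sgQuotient Λ (sgGcd Λ)))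
      {Λ : Set ℕ | IsNumericalSemigroup Λ ∧ sgGenus Λ = g} := by
  rintro Λ₁ ⟨h₁, hg₁⟩ Λ₂ ⟨h₂, hg₂⟩ he
  obtain ⟨hd, hq⟩ := Prod.mk.inj he
  exact eq_of_sgQuotient_eq h₁.2.2 h₂.2.2 (hg₁.trans hg₂.symm)
    (fun _ ha => sgGcd_dvd ha) (fun _ ha => hd ▸ sgGcd_dvd ha) (hd ▸ hq)

lemma ncard_infinite_sgDescendants_diff_isOrdinary_le (g : ℕ) :
    ({Λ : Set ℕ | IsNumericalSemigroup Λ ∧ sgGenus Λ = g ∧ (sgDescendants Λ).Infinite} \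
        {Λ | IsOrdinary Λ}).ncard ≤
      (g - 1) * {Λ : Set ℕ | IsNumericalSemigroup Λ ∧ sgGenus Λ ≤ (g - 1) / 2}.ncard := by
  calc _ ≤ ((Finset.Icc 2 g : Set ℕ) ×ˢ
          {Λ : Set ℕ | IsNumericalSemigroup Λ ∧ sgGenus Λ ≤ (g - 1) / 2}).ncard := by
        refine ncard_le_ncard_of_injOn _ ?_ ((injOn_sgGcd_sgQuotient g).mono ?_)
          ((Finset.finite_toSet _).prod (finite_setOf_sgGenus_le _))
        · rintro Λ ⟨⟨hΛ, rfl, hinf⟩, hord⟩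
          have hd := sgGcd_mem_Icc hΛ hord hinf
          exact ⟨hd, isNumericalSemigroup_sgQuotient hΛ _,
            sgGenus_sgQuotient_sgGcd_le hΛ hord (Finset.mem_Icc.mp hd).1⟩
        · exact fun _ h => ⟨h.1.1, h.1.2.1⟩
    _ = _ := by rw [ncard_prod, ncard_coe_finset, Nat.card_Icc, Nat.add_sub_add_right g 1 1]

theorem stmt18_general (g : ℕ) :
    {Λ : Set ℕ | IsNumericalSemigroup Λ ∧ sgGenus Λ = g ∧ (sgDescendants Λ).Infinite}.ncard ≤
      1 + (g - 1) * ∑ i ∈ Finset.range ((g - 1) / 2 + 1),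
        {Λ : Set ℕ | IsNumericalSemigroup Λ ∧ sgGenus Λ = i}.ncard := by
  set L := {Λ : Set ℕ | IsNumericalSemigroup Λ ∧ sgGenus Λ = g ∧ (sgDescendants Λ).Infinite}
  have hL : L.Finite := (finite_setOf_sgGenus_le g).subset fun _ h => ⟨h.1, h.2.1.le⟩
  have hord : (L ∩ {Λ | IsOrdinary Λ}).ncard ≤ 1 :=
    (ncard_le_one (hL.subset inter_subset_left)).mpr fun _ h₁ _ h₂ =>
      IsOrdinary.eq_of_sgGenus_eq h₁.2 h₂.2 (h₁.1.2.1.trans h₂.1.2.1.symm)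
  have hlow : {Λ : Set ℕ | IsNumericalSemigroup Λ ∧ sgGenus Λ ≤ (g - 1) / 2} =
      ⋃ i ∈ Finset.range ((g - 1) / 2 + 1),
        {Λ : Set ℕ | IsNumericalSemigroup Λ ∧ sgGenus Λ = i} := by
    ext Λ
    simp
  calc L.ncard = (L ∩ {Λ | IsOrdinary Λ}).ncard + (L \ {Λ | IsOrdinary Λ}).ncard :=
        (ncard_inter_add_ncard_sdiff_eq_ncard L _ hL).symm
    _ ≤ 1 + (g - 1) * {Λ : Set ℕ | IsNumericalSemigroup Λ ∧ sgGenus Λ ≤ (g - 1) / 2}.ncard :=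
        add_le_add hord (ncard_infinite_sgDescendants_diff_isOrdinary_le g)
    _ ≤ _ := by
        rw [hlow]
        gcongr
        exact Finset.set_ncard_biUnion_le _ _

theorem stmt18 (g : ℕ) (hg : 1 ≤ g) :
    {Λ : Set ℕ | IsNumericalSemigroup Λ ∧ sgGenus Λ = g ∧ (sgDescendants Λ).Infinite}.ncard ≤
      1 + (g - 1) * ∑ i ∈ Finset.range ((g - 1) / 2 + 1),
        {Λ : Set ℕ | IsNumericalSemigroup Λ ∧ sgGenus Λ = i}.ncard :=
  stmt18_general g
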